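/- Let f be a piecewise contracting map that is atomically one-to-one, meaning any two atoms of the same generation with different itineraries either coincide or are disjoint. Then the attractor Λ is totally disconnected. -/
import Mathlib


open Metric Filter Set

/-- One application of the transformation `F_i(A) = closure (f(A ∩ X_i))`. -/
def atomStep {X : Type*} [MetricSpace X] (f : X → X) (P : Set X) (A : Set X) : Set X :=
  closure (f '' (A ∩ P))

/-- The atom with itinerary `l = (i₁, …, iₙ)`: `F_{iₙ} ∘ ⋯ ∘ F_{i₁}(X)`. -/
def atomOf {X : Type*} [MetricSpace X] {N : ℕ} (f : X → X) (P : Fin N → Set X)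
    (l : List (Fin N)) : Set X :=
  l.foldl (fun A i => atomStep f (P i) A) Set.univ

/-- `Λₙ`: the union of all atoms of generation `n`. -/
def LamN {X : Type*} [MetricSpace X] {N : ℕ} (f : X → X) (P : Fin N → Set X) (n : ℕ) : Set X :=
  ⋃ l ∈ {l : List (Fin N) | l.length = n}, atomOf f P l

/-- The attractor `Λ = ⋂_{n ≥ 1} Λₙ`. -/
def Lam {X : Type*} [MetricSpace X] {N : ℕ} (f : X → X) (P : Fin N → Set X) : Set X :=
  ⋂ n ∈ {n : ℕ | 1 ≤ n}, LamN f P n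

/-- `X̃ = ⋂ₙ f⁻ⁿ(X \ Δ)` where `X \ Δ = ⋃ᵢ Xᵢ`. -/
def tildeSet {X : Type*} {N : ℕ} (f : X → X) (P : Fin N → Set X) : Set X :=
  ⋂ n : ℕ, f^[n] ⁻¹' (⋃ i, P i)

/-- A point is non-wandering if orbits of `X̃`-points in each ball return to it
at arbitrarily large times. -/
def nonwandering {X : Type*} [MetricSpace X] {N : ℕ} (f : X → X) (P : Fin N → Set X)
    (x : X) : Prop :=
  ∀ ε > 0, ∀ m : ℕ, ∃ n ≥ m, (f^[n] '' (ball x ε ∩ tildeSet f P) ∩ ball x ε).Nonempty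

/-- The ω-limit set of a point. -/
def omegaSet {X : Type*} [MetricSpace X] (f : X → X) (x : X) : Set X :=
  {y | MapClusterPt y atTop fun n : ℕ => f^[n] x}

/-- The limit set `L`. -/
def limitSet {X : Type*} [MetricSpace X] {N : ℕ} (f : X → X) (P : Fin N → Set X) : Set X :=
  closure (⋃ x ∈ tildeSet f P, omegaSet f x)

section Aux

variable {X : Type*} [MetricSpace X] [CompactSpace X] {N : ℕ}

lemma diam_atomStep_le (f : X → X) (Pi A : Set X) (lam : ℝ) (hlam0 : 0 ≤ lam)
    (hctr : ∀ x ∈ Pi, ∀ y ∈ Pi, dist (f x) (f y) ≤ lam * dist x y) :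
    Metric.diam (atomStep f Pi A) ≤ lam * Metric.diam A := by
  rw [atomStep, Metric.diam_closure]
  apply Metric.diam_le_of_forall_dist_le (by positivity)
  rintro _ ⟨a, ⟨haA, haP⟩, rfl⟩ _ ⟨b, ⟨hbA, hbP⟩, rfl⟩
  calc dist (f a) (f b) ≤ lam * dist a b := hctr a haP b hbP
    _ ≤ lam * Metric.diam A :=
        mul_le_mul_of_nonneg_left
          (Metric.dist_le_diam_of_mem Metric.isBounded_of_compactSpace haA hbA) hlam0

lemma diam_foldl_le (f : X → X) (P : Fin N → Set X) (lam : ℝ) (hlam0 : 0 ≤ lam)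
    (hctr : ∀ i, ∀ x ∈ P i, ∀ y ∈ P i, dist (f x) (f y) ≤ lam * dist x y)
    (l : List (Fin N)) : ∀ A : Set X,
    Metric.diam (l.foldl (fun A i => atomStep f (P i) A) A) ≤ lam ^ l.length * Metric.diam A := by
  induction l with
  | nil => intro A; simp
  | cons i l ih =>
    intro A
    calc Metric.diam ((i :: l).foldl (fun A i => atomStep f (P i) A) A)
        ≤ lam ^ l.length * Metric.diam (atomStep f (P i) A) := ih _
      _ ≤ lam ^ l.length * (lam * Metric.diam A) :=
          mul_le_mul_of_nonneg_left (diam_atomStep_le f (P i) A lam hlam0 (hctr i))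
            (by positivity)
      _ = lam ^ (i :: l).length * Metric.diam A := by simp [List.length_cons, pow_succ]; ring

lemma isClosed_foldl (f : X → X) (P : Fin N → Set X) (l : List (Fin N)) :
    ∀ A : Set X, IsClosed A → IsClosed (l.foldl (fun A i => atomStep f (P i) A) A) := by
  induction l with
  | nil => intro A hA; exact hA
  | cons i l ih => intro A _; exact ih _ isClosed_closure

lemma isClosed_atomOf (f : X → X) (P : Fin N → Set X) (l : List (Fin N)) :
    IsClosed (atomOf f P l) := isClosed_foldl f P l _ isClosed_univ

end Aux
/-- If the map is atomically one-to-one (two atoms of the same generation either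
coincide or are disjoint), then the attractor is totally disconnected. -/
theorem attractor_totallyDisconnected_of_atomically_one_to_one {X : Type*} [MetricSpace X] [CompactSpace X] [LocallyConnectedSpace X] {N : ℕ}
    (f : X → X) (P : Fin N → Set X) (lam : ℝ)
    (hN : 2 ≤ N)
    (hne : ∀ i, (P i).Nonempty)
    (hop : ∀ i, IsOpen (P i))
    (hdisj : ∀ i j, i ≠ j → Disjoint (P i) (P j))
    (hcov : (⋃ i, closure (P i)) = Set.univ)
    (hlam0 : 0 < lam) (hlam1 : lam < 1)
    (hctr : ∀ i, ∀ x ∈ P i, ∀ y ∈ P i, dist (f x) (f y) ≤ lam * dist x y)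
    (htilde : (tildeSet f P).Nonempty)
    (hatom : ∀ l l' : List (Fin N), l.length = l'.length →
      atomOf f P l = atomOf f P l' ∨ Disjoint (atomOf f P l) (atomOf f P l')) :
    IsTotallyDisconnected (Lam f P) := by
  intro t hts htc x hx y hy
  set D := Metric.diam (Set.univ : Set X) with hD
  have key : ∀ n : ℕ, 1 ≤ n → dist x y ≤ lam ^ n * D := by
    intro n hn
    have htn : t ⊆ LamN f P n := by
      intro z hz
      have h1 := hts hz
      simp only [Lam, Set.mem_iInter, Set.mem_setOf_eq] at h1
      exact h1 n hn
    have hmem : ∀ w ∈ t, ∃ l : List (Fin N), l.length = n ∧ w ∈ atomOf f P l := by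
      intro w hw
      have := htn hw
      simp only [LamN, Set.mem_iUnion, Set.mem_setOf_eq] at this
      obtain ⟨l, hl, h⟩ := this
      exact ⟨l, hl, h⟩
    obtain ⟨l, hl, hxl⟩ := hmem x hx
    set A := atomOf f P l with hA
    have hsub : t ⊆ A := by
      by_contra hns
      obtain ⟨z, hzt, hz⟩ := Set.not_subset.1 hns
      set B := ⋃ l' ∈ {l' : List (Fin N) | l'.length = n ∧ Disjoint (atomOf f P l') A},
        atomOf f P l' with hB
      have hBclosed : IsClosed B :=
        Set.Finite.isClosed_biUnion
          ((List.finite_length_eq (Fin N) n).subset (fun l' hl' => hl'.1))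
          (fun l' _ => isClosed_atomOf f P l')
      have hABdisj : ∀ w, w ∈ A → w ∉ B := by
        intro w hwA hwB
        simp only [hB, Set.mem_iUnion, Set.mem_setOf_eq] at hwB
        obtain ⟨l', ⟨_, hd⟩, hwl'⟩ := hwB
        exact (hd.le_bot ⟨hwl', hwA⟩)
      have hcover : ∀ w ∈ t, w ∈ A ∨ w ∈ B := by
        intro w hw
        obtain ⟨l', hl', hwl'⟩ := hmem w hw
        rcases hatom l' l (hl'.trans hl.symm) with heq | hd
        · exact Or.inl (by rw [hA, ← heq]; exact hwl')
        · exact Or.inr (Set.mem_biUnion ⟨hl', hd⟩ hwl')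
      have hzB : z ∈ B := (hcover z hzt).resolve_left hz
      obtain ⟨w, hwt, hwB, hwA⟩ := htc Bᶜ Aᶜ hBclosed.isOpen_compl
        (isClosed_atomOf f P l).isOpen_compl
        (fun w hw => by
          rcases hcover w hw with h | h
          · exact Or.inl (hABdisj w h)
          · exact Or.inr (fun hwA => hABdisj w hwA h))
        ⟨x, hx, hABdisj x hxl⟩ ⟨z, hzt, hz⟩
      rcases hcover w hwt with h | h
      · exact hwA h
      · exact hwB h
    have hdiam : Metric.diam A ≤ lam ^ n * D := by
      have := diam_foldl_le f P lam hlam0.le hctr l Set.univ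
      rwa [hl] at this
    exact le_trans (Metric.dist_le_diam_of_mem
      (Metric.isBounded_of_compactSpace) (hsub hx) (hsub hy)) hdiam
  have hlim : Filter.Tendsto (fun n : ℕ => lam ^ n * D) Filter.atTop (nhds 0) := by
    have := (tendsto_pow_atTop_nhds_zero_of_lt_one hlam0.le hlam1).mul_const D
    simpa using this
  have hle : dist x y ≤ 0 :=
    ge_of_tendsto hlim (Filter.eventually_atTop.2 ⟨1, fun n hn => key n hn⟩)
  exact dist_le_zero.1 hle
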